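/- Let 1 ≤ k < min{n_i : i ∈ {1, …, m}}. If the generalized affine Cartesian code C_k(𝒜, v_1 × ⋯ × v_m) is LCD, then C_k(A_i, v_i) is LCD for every i ∈ {1, …, m}. -/

import Mathlib

open MvPolynomial

/-- The points of the Cartesian set `𝒜 = A 0 × ⋯ × A (m-1)`. -/
abbrev CartPts {K : Type*} {m : ℕ} (A : Fin m → Finset K) :=
  { x : Fin m → K // ∀ i, x i ∈ A i }

/-- The space `S_{<k}` of multivariate polynomials of total degree less than `k`. -/
def degLT (K : Type*) [Field K] (m k : ℕ) : Submodule K (MvPolynomial (Fin m) K) where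
  carrier := {f | ∀ d ∈ f.support, (d.sum fun _ e => e) < k}
  zero_mem' := by simp
  add_mem' := fun {f g} hf hg d hd => by
    rcases Finset.mem_union.mp (MvPolynomial.support_add hd) with h | h
    exacts [hf d h, hg d h]
  smul_mem' := fun c f hf d hd => hf d (MvPolynomial.support_smul hd)

/-- The evaluation map `ev : f ↦ (v_a · f(a))_{a ∈ 𝒜}`. -/
noncomputable def evalLM {K : Type*} [Field K] {m : ℕ} (A : Fin m → Finset K)
    (v : CartPts A → K) : MvPolynomial (Fin m) K →ₗ[K] (CartPts A → K) :=
  LinearMap.pi fun a => v a • (MvPolynomial.aeval (a.1 : Fin m → K)).toLinearMap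

/-- The generalized affine Cartesian code `C_k(𝒜, v)`, the image of `S_{<k}` under `ev_k`. -/
noncomputable def cartCode {K : Type*} [Field K] {m : ℕ} (k : ℕ) (A : Fin m → Finset K)
    (v : CartPts A → K) : Submodule K (CartPts A → K) :=
  Submodule.map (evalLM A v) (degLT K m k)

/-- The dual code `C^⊥` with respect to the standard dot product. -/
def dualCode {K : Type*} [Field K] {ι : Type*} [Fintype ι] (C : Submodule K (ι → K)) :
    Submodule K (ι → K) where
  carrier := {w | ∀ c ∈ C, ∑ i, w i * c i = 0}
  zero_mem' := by simp
  add_mem' := fun {w w'} hw hw' c hc => by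
    simp only [Pi.add_apply, add_mul, Finset.sum_add_distrib, hw c hc, hw' c hc, add_zero]
  smul_mem' := fun r w hw c hc => by
    simp only [Pi.smul_apply, smul_eq_mul, mul_assoc, ← Finset.mul_sum, hw c hc, mul_zero]

/-- A linear code is LCD if it meets its dual trivially. -/
def IsLCD {K : Type*} [Field K] {ι : Type*} [Fintype ι] (C : Submodule K (ι → K)) : Prop :=
  C ⊓ dualCode C = ⊥

/-- The one-variable generalized Reed–Solomon code on a set `B ⊆ K` with weights `w`. -/
noncomputable def grsCode {K : Type*} [Field K] (B : Finset K) (k : ℕ) (w : {x // x ∈ B} → K) :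
    Submodule K ({x // x ∈ B} → K) :=
  Submodule.map (LinearMap.pi fun b => w b • (Polynomial.aeval (b : K)).toLinearMap)
    (Polynomial.degreeLT K k)

/-!
If `c = ev_i(f)` lies in `C_k(A_i, v_i) ∩ C_k(A_i, v_i)^⊥`, then `f(X_i)` has total degree `< k`
and evaluates on `𝒜` to the Cartesian vector `v_1 × ⋯ × c × ⋯ × v_m`. The dot product of two
Cartesian vectors is the product of the componentwise dot products, and `S_{<k}` is spanned by
monomials `X^d` with `|d| < k`, so `d_i < k` and the `i`-th factor `c · ev_i(X^{d_i})` vanishes.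
Hence this vector lies in `C_k(𝒜, v) ∩ C_k(𝒜, v)^⊥ = 0`; as the `v_j` have no zero entries and the
`A_j` are nonempty, `c = 0`.
-/

section

variable {K : Type*} [Field K] {m : ℕ} {A : Fin m → Finset K}

noncomputable def grsEvalLM (B : Finset K) (w : {x // x ∈ B} → K) :
    Polynomial K →ₗ[K] ({x // x ∈ B} → K) :=
  LinearMap.pi fun b => w b • (Polynomial.aeval (b : K)).toLinearMap

lemma grsEvalLM_apply (B : Finset K) (w : {x // x ∈ B} → K) (f : Polynomial K)
    (b : {x // x ∈ B}) : grsEvalLM B w f b = w b * Polynomial.aeval (b : K) f :=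
  rfl

lemma mem_dualCode {ι : Type*} [Fintype ι] {C : Submodule K (ι → K)} {u : ι → K} :
    u ∈ dualCode C ↔ ∀ c ∈ C, u ⬝ᵥ c = 0 :=
  Iff.rfl

/-- The Cartesian vector `g 0 × ⋯ × g (m-1)`. -/
def prodVec (g : ∀ j, {x // x ∈ A j} → K) : CartPts A → K :=
  fun a => ∏ j, g j ⟨a.1 j, a.2 j⟩

lemma dotProduct_prodVec [Fintype K] [DecidableEq K] (g h : ∀ j, {x // x ∈ A j} → K) :
    prodVec g ⬝ᵥ prodVec h = ∏ j, g j ⬝ᵥ h j := by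
  simp only [dotProduct, prodVec, ← Finset.prod_mul_distrib, Fintype.prod_sum]
  exact Fintype.sum_equiv Equiv.subtypePiEquivPi _ _ fun _ => rfl

lemma prodVec_eq_zero_iff {g : ∀ j, {x // x ∈ A j} → K} : prodVec g = 0 ↔ ∃ j, g j = 0 := by
  refine ⟨fun h => ?_, fun ⟨j, hj⟩ => ?_⟩
  · by_contra! hg
    choose b hb using fun j => Function.ne_iff.mp (hg j)
    exact Finset.prod_ne_zero_iff.mpr (fun j _ => hb j)
      (congrFun h ⟨fun j => b j, fun j => (b j).2⟩)
  · ext a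
    exact Finset.prod_eq_zero (Finset.mem_univ j) (by simp [hj])

lemma evalLM_prodVec_monomial (w : ∀ j, {x // x ∈ A j} → K) (d : Fin m →₀ ℕ) (r : K) :
    evalLM A (prodVec w) (monomial d r) = r • prodVec fun j b => w j b * (b : K) ^ d j := by
  ext a
  simp only [evalLM, prodVec, LinearMap.pi_apply, LinearMap.smul_apply, AlgHom.toLinearMap_apply,
    aeval_monomial, Algebra.algebraMap_self, RingHom.id_apply,
    Finsupp.prod_fintype _ _ (fun _ => pow_zero _), Finset.prod_mul_distrib, Pi.smul_apply,
    smul_eq_mul]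
  ring

lemma prodVec_update_grsEvalLM (w : ∀ j, {x // x ∈ A j} → K) (i : Fin m) (f : Polynomial K)
    (a : CartPts A) :
    prodVec (Function.update w i (grsEvalLM (A i) (w i) f)) a =
      prodVec w a * Polynomial.aeval (a.1 i) f := by
  have hupd : ∀ j (b : {x // x ∈ A j}), Function.update w i (grsEvalLM (A i) (w i) f) j b =
      w j b * if j = i then Polynomial.aeval (b : K) f else 1 := by
    intro j b
    rcases eq_or_ne j i with rfl | hji
    · simp [grsEvalLM_apply]
    · simp [hji]
  simp only [prodVec, hupd, Finset.prod_mul_distrib, Finset.prod_ite_eq', Finset.mem_univ, if_true]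

lemma evalLM_prodVec_toMvPolynomial (w : ∀ j, {x // x ∈ A j} → K) (i : Fin m)
    (f : Polynomial K) :
    evalLM A (prodVec w) (f.toMvPolynomial i) =
      prodVec (Function.update w i (grsEvalLM (A i) (w i) f)) := by
  ext a
  rw [prodVec_update_grsEvalLM]
  simp [evalLM]

lemma toMvPolynomial_monomial (i : Fin m) (n : ℕ) (r : K) :
    (Polynomial.monomial n r).toMvPolynomial i = monomial (Finsupp.single i n) r := by
  simp [Polynomial.toMvPolynomial, ← Polynomial.C_mul_X_pow_eq_monomial, C_mul_X_pow_eq_monomial]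

lemma toMvPolynomial_mem_degLT {k : ℕ} (i : Fin m) {f : Polynomial K}
    (hf : f ∈ Polynomial.degreeLT K k) : f.toMvPolynomial i ∈ degLT K m k := by
  classical
  intro d hd
  rw [f.as_sum_support, map_sum] at hd
  obtain ⟨n, hn, hd⟩ := Finset.mem_biUnion.mp (support_sum hd)
  rw [toMvPolynomial_monomial] at hd
  rw [Finset.mem_singleton.mp (support_monomial_subset hd)]
  rw [Polynomial.mem_degreeLT] at hf
  simpa using (Polynomial.le_degree_of_mem_supp n hn).trans_lt hf

lemma prodVec_mem_dualCode_cartCode [Fintype K] [DecidableEq K] {k : ℕ}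
    {w g : ∀ j, {x // x ∈ A j} → K} (i : Fin m) (hg : g i ∈ dualCode (grsCode (A i) k (w i))) :
    prodVec g ∈ dualCode (cartCode k A (prodVec w)) := by
  rw [mem_dualCode]
  rintro _ ⟨Q, hQ, rfl⟩
  rw [Q.as_sum, map_sum, dotProduct_sum]
  refine Finset.sum_eq_zero fun d hd => ?_
  rw [evalLM_prodVec_monomial, dotProduct_smul, dotProduct_prodVec,
    Finset.prod_eq_zero (Finset.mem_univ i), smul_zero]
  have hdi : d i < k := (Finsupp.le_degree i d).trans_lt (hQ d hd)
  refine hg _ ⟨Polynomial.X ^ d i, ?_, ?_⟩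
  · simpa [Polynomial.mem_degreeLT] using hdi
  · ext b
    simp

end

theorem components_isLCD_of_cartCode_general {K : Type*} [Field K] [Fintype K] [DecidableEq K]
    {m : ℕ} (A : Fin m → Finset K) (hA : ∀ i, (A i).Nonempty)
    (w : ∀ i, {x // x ∈ A i} → K) (hw : ∀ i b, w i b ≠ 0)
    (k : ℕ)
    (h : IsLCD (cartCode k A (fun a => ∏ i, w i ⟨a.1 i, a.2 i⟩))) :
    ∀ i, IsLCD (grsCode (A i) k (w i)) := by
  intro i
  rw [IsLCD, Submodule.eq_bot_iff]
  rintro _ ⟨⟨f, hf, rfl⟩, hc⟩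
  change grsEvalLM (A i) (w i) f ∈ _ at hc
  change grsEvalLM (A i) (w i) f = 0
  set g := Function.update w i (grsEvalLM (A i) (w i) f)
  have hg_self : g i = grsEvalLM (A i) (w i) f := Function.update_self ..
  have hg_ne : ∀ j ≠ i, g j = w j := fun j hji => Function.update_of_ne hji ..
  have hg_code : prodVec g ∈ cartCode k A (prodVec w) :=
    ⟨_, toMvPolynomial_mem_degLT i hf, evalLM_prodVec_toMvPolynomial w i f⟩
  have hg_dual : prodVec g ∈ dualCode (cartCode k A (prodVec w)) :=
    prodVec_mem_dualCode_cartCode i (hg_self ▸ hc)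
  have hg_zero : prodVec g = 0 := by
    have h' : IsLCD (cartCode k A (prodVec w)) := h
    exact (Submodule.eq_bot_iff _).mp h' _ ⟨hg_code, hg_dual⟩
  obtain ⟨j, hj⟩ := prodVec_eq_zero_iff.mp hg_zero
  rcases eq_or_ne j i with rfl | hji
  · rwa [hg_self] at hj
  · rw [hg_ne j hji] at hj
    obtain ⟨b, hb⟩ := hA j
    exact absurd (congrFun hj ⟨b, hb⟩) (hw j ⟨b, hb⟩)

/-- If `k < min{n_i}` and `C_k(𝒜, v_1 × ⋯ × v_m)` is LCD, then every component code
`C_k(A_i, v_i)` is LCD. -/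
theorem components_isLCD_of_cartCode {K : Type*} [Field K] [Fintype K] [DecidableEq K]
    {m : ℕ} (hm : 1 ≤ m) (A : Fin m → Finset K) (hA : ∀ i, (A i).Nonempty)
    (w : ∀ i, {x // x ∈ A i} → K) (hw : ∀ i b, w i b ≠ 0)
    (k : ℕ) (hk : 1 ≤ k) (hkm : ∀ i, k < (A i).card)
    (h : IsLCD (cartCode k A (fun a => ∏ i, w i ⟨a.1 i, a.2 i⟩))) :
    ∀ i, IsLCD (grsCode (A i) k (w i)) :=
  components_isLCD_of_cartCode_general A hA w hw k h
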